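/- Let L ≥ 1, A_l ≥ 2 for all l, n ≥ 1, (K,S) ∈ 𝕄, and let either (Case 1) η(ε) = (1+ε)^{L+1} − 1 or (Case 2) η(ε) = (1+ε)·(1 + 2√2 ε + √2 ε²)^L − 1. Suppose σ ∈ (0, η(1)] satisfies φ_{(K,S)}(σ) = √n·σ². Then σ² + (ln 2)·D_{(K,S)}/n ≤ (D_{(K,S)}/n)·(5 + √(max(½ ln n + ½ ln L, (ln 2)/2 + ln L)))². -/

import Mathlib

open Real BigOperators

noncomputable section

/-- The collection 𝕄 of model indices `(K, S)`. -/
def Mset (L : ℕ) : Set (ℕ × Finset (Fin L)) :=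
  {p | (p.1 = 1 ∧ p.2 = ∅) ∨ (2 ≤ p.1 ∧ p.2.Nonempty)}

/-- Dimension `D_{(K,S)}` of the model `M_{(K,S)}`. -/
def Dks {L : ℕ} (A : Fin L → ℕ) (K : ℕ) (S : Finset (Fin L)) : ℕ :=
  (K - 1) + K * ∑ l ∈ S, (A l - 1) + ∑ l ∈ Sᶜ, (A l - 1)

/-- The complexity constant `C_{(K,S)}`. -/
def Cks {L : ℕ} (A : Fin L → ℕ) (K : ℕ) (S : Finset (Fin L)) : ℝ :=
  (Real.log (2 * Real.pi * Real.exp 1) * (Dks A K S : ℝ)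
    + Real.log (4 * Real.pi * Real.exp 1)
        * ((if 2 ≤ K then (1 : ℝ) else 0) + (L : ℝ) + ((K : ℝ) - 1) * (S.card : ℝ))
    + (if 2 ≤ K then Real.log ((K : ℝ) + 1) else 0)
    + ∑ l, Real.log ((A l : ℝ) + 1)
    + ((K : ℝ) - 1) * ∑ l ∈ S, Real.log ((A l : ℝ) + 1)) / 2

/-- The function `η` of Case 1. -/
def etaCase1 (L : ℕ) (x : ℝ) : ℝ := (1 + x) ^ (L + 1) - 1

/-- The function `η` of Case 2. -/
def etaCase2 (L : ℕ) (x : ℝ) : ℝ :=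
  (1 + x) * (1 + 2 * Real.sqrt 2 * x + Real.sqrt 2 * x ^ 2) ^ L - 1

/-- The function `φ_{(K,S)}`, written in terms of the inverse `g` of `η`. -/
def phiKS {L : ℕ} (A : Fin L → ℕ) (K : ℕ) (S : Finset (Fin L)) (g : ℝ → ℝ) (σ : ℝ) : ℝ :=
  (2 * Real.sqrt (Real.log 2) * Real.sqrt (Dks A K S)
    + Real.sqrt (Cks A K S - (Dks A K S : ℝ) * Real.log (g σ))) * σ

/-! With `x = η⁻¹(σ) ∈ [0, 1]`, the defining equation reads
`√n σ = 2 √(ln 2 · D) + √(C − D ln x)`; in particular `σ² ≥ D / n`.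
Both choices of `η` satisfy `η(x) + 1 ≤ exp (16 L x)`, so
`x ≥ ln (1 + σ) / (16 L) ≥ min(σ, 1) / (32 L)`, and together with `σ² ≥ D / n` this bounds `−ln x`
by `5 ln 2 + M`, `M` the maximum in the statement. Since `C ≤ (9/2 · ln 2 + 1) D`, squaring the
equation gives `n σ² ≤ D (23/5 + √M)²`, and the gap between `23/5` and `5` absorbs `ln 2 · D / n`. -/

open Finset

lemma log_nat_add_one_le {m : ℕ} (hm : 2 ≤ m) : log (m + 1) ≤ 2 * log 2 * (m - 1) := by
  obtain ⟨k, rfl⟩ : ∃ k, m = k + 2 := ⟨m - 2, by omega⟩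
  have hpow : ((k + 2 : ℕ) : ℝ) + 1 ≤ 4 ^ (k + 1) := by
    have := one_add_mul_le_pow (by norm_num : (-2 : ℝ) ≤ 3) (k + 1)
    push_cast at this ⊢
    norm_num at this
    linarith
  calc log ((k + 2 : ℕ) + 1) ≤ log (4 ^ (k + 1)) := log_le_log (by positivity) hpow
    _ = 2 * log 2 * ((k + 2 : ℕ) - 1) := by
      rw [log_pow, show (4 : ℝ) = 2 ^ 2 by norm_num, log_pow]
      push_cast
      ring

lemma log_mul_pi_mul_exp_one_le {c : ℝ} (hc : 0 < c) :
    log (c * π * exp 1) ≤ log c + 2 * log 2 + 1 := by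
  have hπ : log π ≤ 2 * log 2 := by
    rw [← log_four_eq]
    exact log_le_log pi_pos pi_le_four
  rw [log_mul (by positivity) (exp_pos 1).ne', log_mul hc.ne' pi_pos.ne', log_exp]
  linarith

section Dimension

variable {L : ℕ} {A : Fin L → ℕ} {K : ℕ} {S : Finset (Fin L)}

lemma one_le_of_mem_mset (hm : (K, S) ∈ Mset L) : 1 ≤ K := by
  rcases hm with ⟨h, -⟩ | ⟨h, -⟩ <;> simp only at h <;> omega

variable (hA : ∀ l, 2 ≤ A l)
include hA

lemma card_le_sum_sub_one (T : Finset (Fin L)) : (#T : ℝ) ≤ ∑ l ∈ T, ((A l : ℝ) - 1) := by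
  simpa using card_nsmul_le_sum T (fun l ↦ (A l : ℝ) - 1) 1 fun l _ ↦ by
    have : (2 : ℝ) ≤ A l := by exact_mod_cast hA l
    linarith

lemma dks_cast (hK : 1 ≤ K) :
    (Dks A K S : ℝ) = (K - 1) + K * ∑ l ∈ S, ((A l : ℝ) - 1) + ∑ l ∈ Sᶜ, ((A l : ℝ) - 1) := by
  have hsum : ∀ T : Finset (Fin L), ((∑ l ∈ T, (A l - 1) : ℕ) : ℝ) = ∑ l ∈ T, ((A l : ℝ) - 1) :=
    fun T ↦ by push_cast [Nat.cast_sub (one_le_two.trans (hA _))]; rfl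
  unfold Dks
  push_cast [Nat.cast_sub hK, hsum]
  ring

lemma ite_add_add_mul_card_le_dks (hK : 1 ≤ K) :
    (if 2 ≤ K then (1 : ℝ) else 0) + L + ((K : ℝ) - 1) * #S ≤ Dks A K S := by
  have hK' : (1 : ℝ) ≤ K := by exact_mod_cast hK
  have hite : (if 2 ≤ K then (1 : ℝ) else 0) ≤ K - 1 := by
    split_ifs with h
    · have : (2 : ℝ) ≤ K := by exact_mod_cast h
      linarith
    · linarith
  have hL : (L : ℝ) = #S + #Sᶜ := by
    rw [← Nat.cast_add, card_add_card_compl, Fintype.card_fin]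
  rw [dks_cast hA hK, hL]
  nlinarith [card_le_sum_sub_one hA S, card_le_sum_sub_one hA Sᶜ]

lemma cast_le_dks (hK : 1 ≤ K) : (L : ℝ) ≤ Dks A K S := by
  have hite : (0 : ℝ) ≤ if 2 ≤ K then 1 else 0 := by split_ifs <;> norm_num
  have hK' : (1 : ℝ) ≤ K := by exact_mod_cast hK
  nlinarith [ite_add_add_mul_card_le_dks (S := S) hA hK, (#S).cast_nonneg (α := ℝ)]

lemma ite_log_add_sum_log_le_dks (hK : 1 ≤ K) :
    (if 2 ≤ K then log ((K : ℝ) + 1) else 0) + ∑ l, log ((A l : ℝ) + 1)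
      + ((K : ℝ) - 1) * ∑ l ∈ S, log ((A l : ℝ) + 1) ≤ 2 * log 2 * Dks A K S := by
  have hK' : (0 : ℝ) ≤ K - 1 := by
    have : (1 : ℝ) ≤ K := by exact_mod_cast hK
    linarith
  have hite : (if 2 ≤ K then log ((K : ℝ) + 1) else 0) ≤ 2 * log 2 * (K - 1) := by
    split_ifs with h
    · exact log_nat_add_one_le h
    · positivity
  have hsum (T : Finset (Fin L)) :
      ∑ l ∈ T, log ((A l : ℝ) + 1) ≤ 2 * log 2 * ∑ l ∈ T, ((A l : ℝ) - 1) := by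
    rw [mul_sum]
    exact sum_le_sum fun l _ ↦ log_nat_add_one_le (hA l)
  rw [← sum_add_sum_compl S, dks_cast hA hK]
  nlinarith [hsum S, hsum Sᶜ, mul_le_mul_of_nonneg_left (hsum S) hK']

lemma cks_le (hK : 1 ≤ K) : Cks A K S ≤ (9 / 2 * log 2 + 1) * Dks A K S := by
  have h2πe := log_mul_pi_mul_exp_one_le (c := 2) two_pos
  have h4πe := log_mul_pi_mul_exp_one_le (c := 4) four_pos
  rw [log_four_eq] at h4πe
  have h4πe_nonneg : 0 ≤ log (4 * π * exp 1) :=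
    log_nonneg (by nlinarith [pi_gt_three, exp_one_gt_d9])
  have hcount := ite_add_add_mul_card_le_dks (S := S) hA hK
  have hK' : (1 : ℝ) ≤ K := by exact_mod_cast hK
  have hcount_nonneg : (0 : ℝ) ≤ (if 2 ≤ K then (1 : ℝ) else 0) + L + ((K : ℝ) - 1) * #S := by
    have : (0 : ℝ) ≤ if 2 ≤ K then 1 else 0 := by split_ifs <;> norm_num
    have : (0 : ℝ) ≤ ((K : ℝ) - 1) * #S := mul_nonneg (by linarith) (Nat.cast_nonneg _)
    positivity
  have hlogs := ite_log_add_sum_log_le_dks (S := S) hA hK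
  have hD : (0 : ℝ) ≤ Dks A K S := Nat.cast_nonneg _
  unfold Cks
  linarith [mul_le_mul h4πe hcount hcount_nonneg (by positivity),
    mul_le_mul_of_nonneg_right h2πe hD, mul_nonneg (log_nonneg one_le_two) hD]

end Dimension

lemma etaCase1_add_one_le_exp {L : ℕ} (hL : 1 ≤ L) {x : ℝ} (hx : 0 ≤ x) :
    etaCase1 L x + 1 ≤ exp (16 * L * x) := by
  have hL' : (1 : ℝ) ≤ L := by exact_mod_cast hL
  calc etaCase1 L x + 1 = (1 + x) ^ (L + 1) := by unfold etaCase1; ring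
    _ ≤ exp x ^ (L + 1) := by gcongr; linarith [add_one_le_exp x]
    _ = exp ((L + 1 : ℕ) * x) := (exp_nat_mul x _).symm
    _ ≤ exp (16 * L * x) := by gcongr; push_cast; nlinarith

lemma etaCase2_add_one_le_exp {L : ℕ} (hL : 1 ≤ L) {x : ℝ} (hx₀ : 0 ≤ x) (hx₁ : x ≤ 1) :
    etaCase2 L x + 1 ≤ exp (16 * L * x) := by
  have hL' : (1 : ℝ) ≤ L := by exact_mod_cast hL
  have hbase : 1 + 2 * √2 * x + √2 * x ^ 2 ≤ exp (9 / 2 * x) := by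
    have : 2 * √2 * x + √2 * x ^ 2 ≤ 9 / 2 * x := by
      nlinarith [sqrt_two_lt_three_halves, sqrt_nonneg 2]
    linarith [add_one_le_exp (9 / 2 * x)]
  calc etaCase2 L x + 1 = (1 + x) * (1 + 2 * √2 * x + √2 * x ^ 2) ^ L := by unfold etaCase2; ring
    _ ≤ exp x * exp (9 / 2 * x) ^ L := by
      gcongr
      linarith [add_one_le_exp x]
    _ = exp (x + L * (9 / 2 * x)) := by rw [exp_add, exp_nat_mul]
    _ ≤ exp (16 * L * x) := by gcongr; nlinarith

lemma min_one_div_two_le_log_one_add {σ : ℝ} (hσ : 0 ≤ σ) : min σ 1 / 2 ≤ log (1 + σ) := by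
  have h := one_sub_inv_le_log_of_pos (by linarith : 0 < 1 + σ)
  have hfrac : min σ 1 / 2 ≤ 1 - (1 + σ)⁻¹ := by
    rw [show 1 - (1 + σ)⁻¹ = σ / (1 + σ) by field_simp; ring, le_div_iff₀ (by positivity)]
    rcases le_total σ 1 with h | h
    · rw [min_eq_left h]; nlinarith
    · rw [min_eq_right h]; linarith
  linarith

lemma min_one_div_le_of_add_one_le_exp {σ c x : ℝ} (hσ : 0 ≤ σ) (hc : 0 < c)
    (h : σ + 1 ≤ exp (c * x)) : min σ 1 / (2 * c) ≤ x := by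
  have hlog : log (1 + σ) ≤ c * x := by
    rw [← log_exp (c * x), add_comm]
    exact log_le_log (by linarith) h
  rw [div_le_iff₀ (by positivity)]
  linarith [min_one_div_two_le_log_one_add hσ]

lemma log_sub_log_min_one_le {L D n σ : ℝ} (hL : 0 < L) (hLD : L ≤ D) (hn : 0 < n)
    (hσD : D / n ≤ σ ^ 2) :
    log L - log (min σ 1) ≤ max (log n / 2 + log L / 2) (log L) := by
  rcases le_total σ 1 with h | h
  · rw [min_eq_left h]
    have hD : log D - log n ≤ 2 * log σ := by
      rw [← log_div (by linarith) hn.ne', ← Nat.cast_ofNat, ← log_pow]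
      exact log_le_log (div_pos (by linarith) hn) hσD
    exact le_max_of_le_left (by linarith [log_le_log hL hLD])
  · rw [min_eq_right h, log_one, sub_zero]
    exact le_max_right _ _

lemma neg_log_le_of_add_one_le_exp {L D n σ x : ℝ} (hL : 1 ≤ L) (hLD : L ≤ D) (hn : 0 < n)
    (hσ : 0 < σ) (hσD : D / n ≤ σ ^ 2) (hexp : σ + 1 ≤ exp (16 * L * x)) :
    -log x ≤ 5 * log 2 + max (log n / 2 + log L / 2) (log 2 / 2 + log L) := by
  have hmin : 0 < min σ 1 := lt_min hσ one_pos
  have hx := log_le_log (by positivity)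
    (min_one_div_le_of_add_one_le_exp hσ.le (by positivity) hexp)
  have h16 : log 16 = 4 * log 2 := by
    rw [show (16 : ℝ) = 2 ^ 4 by norm_num, log_pow]; norm_num
  rw [log_div hmin.ne' (by positivity), log_mul two_ne_zero (by positivity),
    log_mul (by norm_num) (by positivity), h16] at hx
  have hmax : max (log n / 2 + log L / 2) (log L)
      ≤ max (log n / 2 + log L / 2) (log 2 / 2 + log L) :=
    max_le_max le_rfl (by linarith [log_nonneg one_le_two])
  linarith [log_sub_log_min_one_le (by linarith) hLD hn hσD]

lemma div_le_sq_of_two_sqrt_log_two_mul_le {D n σ : ℝ} (hD : 0 ≤ D) (hn : 0 < n)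
    (h : 2 * √(log 2) * √D ≤ √n * σ) : D / n ≤ σ ^ 2 := by
  have hsq := pow_le_pow_left₀ (by positivity) h 2
  rw [mul_pow, mul_pow, mul_pow, sq_sqrt (log_nonneg one_le_two), sq_sqrt hD,
    sq_sqrt hn.le] at hsq
  rw [div_le_iff₀ hn]
  nlinarith [log_two_gt_d9]

lemma two_sqrt_log_two_add_sqrt_le : 2 * √(log 2) + √(19 / 2 * log 2 + 1) ≤ 23 / 5 := by
  have h₁ : √(log 2) ≤ 21 / 25 := sqrt_le_iff.2 ⟨by norm_num, by nlinarith [log_two_lt_d9]⟩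
  have h₂ : √(19 / 2 * log 2 + 1) ≤ 29 / 10 :=
    sqrt_le_iff.2 ⟨by norm_num, by nlinarith [log_two_lt_d9]⟩
  linarith

lemma sq_add_log_two_mul_div_le {D n σ E M : ℝ} (hD : 0 ≤ D) (hn : 0 < n) (hM : 0 ≤ M)
    (hfix : √n * σ = 2 * √(log 2) * √D + √E) (hE : E ≤ D * (19 / 2 * log 2 + 1 + M)) :
    σ ^ 2 + log 2 * D / n ≤ D / n * (5 + √M) ^ 2 := by
  set c := 19 / 2 * log 2 + 1
  have hc : 0 ≤ c := by positivity
  have hsqrtE : √E ≤ √D * (√c + √M) := by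
    rw [sqrt_le_left (by positivity)]
    nlinarith [sq_sqrt hD, sq_sqrt hc, sq_sqrt hM, mul_nonneg (sqrt_nonneg c) (sqrt_nonneg M)]
  have hσ : √n * σ ≤ √D * (23 / 5 + √M) := by
    rw [hfix]
    nlinarith [two_sqrt_log_two_add_sqrt_le, sqrt_nonneg D]
  have hsq : n * σ ^ 2 ≤ D * (23 / 5 + √M) ^ 2 := by
    have := pow_le_pow_left₀ (hfix ▸ by positivity) hσ 2
    rwa [mul_pow, mul_pow, sq_sqrt hn.le, sq_sqrt hD] at this
  have hgap : (23 / 5 + √M) ^ 2 + log 2 ≤ (5 + √M) ^ 2 := by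
    nlinarith [sqrt_nonneg M, log_two_lt_d9]
  rw [show σ ^ 2 + log 2 * D / n = (n * σ ^ 2 + log 2 * D) / n by field_simp,
    div_mul_eq_mul_div, div_le_div_iff_of_pos_right hn]
  nlinarith [mul_le_mul_of_nonneg_left hgap hD]

theorem penalty_bound_general (L : ℕ) (hL : 1 ≤ L) (A : Fin L → ℕ) (hA : ∀ l, 2 ≤ A l)
    (n : ℕ) (hn : 1 ≤ n) (K : ℕ) (S : Finset (Fin L)) (hm : (K, S) ∈ Mset L)
    (η : ℝ → ℝ) (hcase : η = etaCase1 L ∨ η = etaCase2 L)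
    -- `g` is the inverse function of `η`
    (g : ℝ → ℝ)
    (hg2 : ∀ y ∈ Set.Icc 0 (η 1), g y ∈ Set.Icc (0 : ℝ) 1 ∧ η (g y) = y)
    (σ : ℝ) (hσ : σ ∈ Set.Ioc (0 : ℝ) (η 1))
    (heq : phiKS A K S g σ = Real.sqrt n * σ ^ 2) :
    σ ^ 2 + Real.log 2 * (Dks A K S : ℝ) / n ≤
      ((Dks A K S : ℝ) / n) *
        (5 + Real.sqrt (max (Real.log n / 2 + Real.log L / 2)
          (Real.log 2 / 2 + Real.log L))) ^ 2 := by
  obtain ⟨hσ₀, hσ₁⟩ := hσ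
  obtain ⟨⟨hx₀, hx₁⟩, hηx⟩ := hg2 σ ⟨hσ₀.le, hσ₁⟩
  have hK := one_le_of_mem_mset hm
  have hn' : (0 : ℝ) < n := by exact_mod_cast hn
  have hfix : √n * σ = 2 * √(log 2) * √(Dks A K S)
      + √(Cks A K S - Dks A K S * log (g σ)) := by
    refine mul_right_cancel₀ hσ₀.ne' ?_
    unfold phiKS at heq
    linear_combination -heq
  have hσD := div_le_sq_of_two_sqrt_log_two_mul_le (Nat.cast_nonneg _) hn'
    (hfix ▸ le_add_of_nonneg_right (sqrt_nonneg _))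
  have hexp : σ + 1 ≤ exp (16 * L * g σ) := by
    nth_rewrite 1 [← hηx]
    rcases hcase with rfl | rfl
    · exact etaCase1_add_one_le_exp hL hx₀
    · exact etaCase2_add_one_le_exp hL hx₀ hx₁
  have hx := neg_log_le_of_add_one_le_exp (by exact_mod_cast hL) (cast_le_dks hA hK) hn' hσ₀
    hσD hexp
  refine sq_add_log_two_mul_div_le (Nat.cast_nonneg _) hn'
    (le_max_of_le_right (by positivity)) hfix ?_
  linarith [cks_le (S := S) hA hK, mul_le_mul_of_nonneg_left hx (Nat.cast_nonneg (Dks A K S))]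

/-- **Lemma 9 (the penalty bound).** If `σ ∈ (0, η(1)]` satisfies
`φ_{(K,S)}(σ) = √n σ²` then
`σ² + (ln 2) D_{(K,S)}/n ≤ (D_{(K,S)}/n) (5 + √(max(½ ln n + ½ ln L, (ln 2)/2 + ln L)))²`. -/
theorem penalty_bound (L : ℕ) (hL : 1 ≤ L) (A : Fin L → ℕ) (hA : ∀ l, 2 ≤ A l)
    (n : ℕ) (hn : 1 ≤ n) (K : ℕ) (S : Finset (Fin L)) (hm : (K, S) ∈ Mset L)
    (η : ℝ → ℝ) (hcase : η = etaCase1 L ∨ η = etaCase2 L)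
    -- `g` is the inverse function of `η`
    (g : ℝ → ℝ)
    (hg1 : ∀ x ∈ Set.Icc (0 : ℝ) 1, g (η x) = x)
    (hg2 : ∀ y ∈ Set.Icc 0 (η 1), g y ∈ Set.Icc (0 : ℝ) 1 ∧ η (g y) = y)
    (σ : ℝ) (hσ : σ ∈ Set.Ioc (0 : ℝ) (η 1))
    (heq : phiKS A K S g σ = Real.sqrt n * σ ^ 2) :
    σ ^ 2 + Real.log 2 * (Dks A K S : ℝ) / n ≤
      ((Dks A K S : ℝ) / n) *
        (5 + Real.sqrt (max (Real.log n / 2 + Real.log L / 2)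
          (Real.log 2 / 2 + Real.log L))) ^ 2 :=
  penalty_bound_general L hL A hA n hn K S hm η hcase g hg2 σ hσ heq

end
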